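/- Generalized Chazy equation from a hypergeometric Picard–Fuchs equation: fix complex numbers α, β, γ and t* ≠ 0, and set P(t) = (α+β)/t + (1−α)/(t−t*) and Q(t) = [γ² − (1−α−β)²]·t*/(4t²(t−t*)). Let U ⊆ ℂ∖{0, t*} be open, let F₁, F₂ : U → ℂ be holomorphic with F₂ nonvanishing, both satisfying F″ + P·F′ + Q·F = 0 on U. Let Ω ⊆ ℂ be open and t : Ω → U holomorphic with F₁(t(τ))/F₂(t(τ)) = τ for all τ ∈ Ω. Define u(τ) = (d/dτ)F₂(t(τ)) / F₂(t(τ)), and u₄ = u̇ − u², u₆ = u̇₄ − 4uu₄, u₈ = u̇₆ − 6uu₆ (dots denoting d/dτ). Then on Ω: C₈₈·u₄²u₈² + C₈₆·u₄u₆²u₈ + C₈₄·u₄⁴u₈ + C₆₆·u₆⁴ + C₆₄·u₄³u₆² + C₄₄·u₄⁶ = 0, where C₈₈ = (2α−1)(2β−1)(α+β−γ−1)²(α+β+γ−1)², C₈₆ = −[(2α−1)(3β−1)+(3α−1)(2β−1)](α+β−γ−1)²(α+β+γ−1)², C₈₄ = −16(2α−1)(2β−1)(α+β−1)(α+β−γ−1)(α+β+γ−1),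 C₆₆ = (3α−1)(3β−1)(α+β−γ−1)²(α+β+γ−1)², C₆₄ = 4[2(2α−1)²(3β−1)+2(3α−1)(2β−1)²−3(α−β)²](α+β−γ−1)(α+β+γ−1), C₄₄ = 64(2α−1)(2β−1)(α+β−1)². -/

import Mathlib

/-! The inverse `t` of the ratio of two solutions satisfies `t' = F₂(t)² / W(t)`, `W` the
Wronskian, and Abel's identity `W' = -P W` turns this into `t'' = (2 F₂'/F₂ + P)(t) t'²`.
Hence, if `u_{2k} = f(t) t'^k`, then `u_{2k}' - 2k u u_{2k} = (f' + k P f)(t) t'^(k+1)`; with the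
Riccati equation for `F₂'/F₂` this gives `u₄ = -Q(t) t'²`, and then `u₆`, `u₈` as explicit
rational functions of `t` times `t'³`, `t'⁴`. The Chazy polynomial is weighted homogeneous of
weight 12, so the claim reduces to a rational identity in `t` alone. -/

open Complex

noncomputable section

/-- Coefficient C₈₈ of the generalized Chazy equation. -/
def C88 (α β γ : ℂ) : ℂ :=
  (2 * α - 1) * (2 * β - 1) * (α + β - γ - 1) ^ 2 * (α + β + γ - 1) ^ 2

/-- Coefficient C₈₆ of the generalized Chazy equation. -/
def C86 (α β γ : ℂ) : ℂ :=
  -((2 * α - 1) * (3 * β - 1) + (3 * α - 1) * (2 * β - 1)) *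
    (α + β - γ - 1) ^ 2 * (α + β + γ - 1) ^ 2

/-- Coefficient C₈₄ of the generalized Chazy equation. -/
def C84 (α β γ : ℂ) : ℂ :=
  -16 * (2 * α - 1) * (2 * β - 1) * (α + β - 1) * (α + β - γ - 1) * (α + β + γ - 1)

/-- Coefficient C₆₆ of the generalized Chazy equation. -/
def C66 (α β γ : ℂ) : ℂ :=
  (3 * α - 1) * (3 * β - 1) * (α + β - γ - 1) ^ 2 * (α + β + γ - 1) ^ 2

/-- Coefficient C₆₄ of the generalized Chazy equation. -/
def C64 (α β γ : ℂ) : ℂ :=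
  4 * (2 * (2 * α - 1) ^ 2 * (3 * β - 1) + 2 * (3 * α - 1) * (2 * β - 1) ^ 2 -
      3 * (α - β) ^ 2) * (α + β - γ - 1) * (α + β + γ - 1)

/-- Coefficient C₄₄ of the generalized Chazy equation. -/
def C44coef (α β : ℂ) : ℂ := 64 * (2 * α - 1) * (2 * β - 1) * (α + β - 1) ^ 2

open Filter Topology

def wronskian (f g : ℂ → ℂ) (s : ℂ) : ℂ := f s * deriv g s - deriv f s * g s

section SecondOrderODE

variable {P Q f g : ℂ → ℂ} {s : ℂ}

theorem hasDerivAt_wronskian (hf : DifferentiableAt ℂ f s) (hf' : DifferentiableAt ℂ (deriv f) s)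
    (hg : DifferentiableAt ℂ g s) (hg' : DifferentiableAt ℂ (deriv g) s)
    (hodef : deriv (deriv f) s + P s * deriv f s + Q s * f s = 0)
    (hodeg : deriv (deriv g) s + P s * deriv g s + Q s * g s = 0) :
    HasDerivAt (wronskian f g) (-P s * wronskian f g s) s := by
  refine ((hf.hasDerivAt.mul hg'.hasDerivAt).sub (hf'.hasDerivAt.mul hg.hasDerivAt)).congr_deriv ?_
  simp only [wronskian]
  linear_combination f s * hodeg - g s * hodef

theorem hasDerivAt_logDeriv_of_ode (hf : DifferentiableAt ℂ f s)
    (hf' : DifferentiableAt ℂ (deriv f) s) (hf0 : f s ≠ 0)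
    (hode : deriv (deriv f) s + P s * deriv f s + Q s * f s = 0) :
    HasDerivAt (logDeriv f) (-Q s - P s * logDeriv f s - logDeriv f s ^ 2) s := by
  refine (hf'.hasDerivAt.div hf.hasDerivAt hf0).congr_deriv ?_
  rw [logDeriv_apply]
  field_simp
  linear_combination f s * hode

theorem hasDerivAt_sq_div_wronskian (hf : DifferentiableAt ℂ f s)
    (hf' : DifferentiableAt ℂ (deriv f) s) (hg : DifferentiableAt ℂ g s)
    (hg' : DifferentiableAt ℂ (deriv g) s) (hg0 : g s ≠ 0) (hW : wronskian g f s ≠ 0)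
    (hodef : deriv (deriv f) s + P s * deriv f s + Q s * f s = 0)
    (hodeg : deriv (deriv g) s + P s * deriv g s + Q s * g s = 0) :
    HasDerivAt (fun x => g x ^ 2 / wronskian g f x)
      ((2 * logDeriv g s + P s) * (g s ^ 2 / wronskian g f s)) s := by
  refine ((hg.hasDerivAt.pow 2).div (hasDerivAt_wronskian hg hg' hf hf' hodeg hodef)
    hW).congr_deriv ?_
  rw [logDeriv_apply, Pi.pow_apply]
  field_simp
  ring

end SecondOrderODE

theorem deriv_mul_wronskian_eq_sq_of_ratio {f g t : ℂ → ℂ} {τ : ℂ}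
    (hf : DifferentiableAt ℂ f (t τ)) (hg : DifferentiableAt ℂ g (t τ)) (hg0 : g (t τ) ≠ 0)
    (ht : DifferentiableAt ℂ t τ) (hratio : ∀ᶠ σ in 𝓝 τ, f (t σ) / g (t σ) = σ) :
    deriv t τ * wronskian g f (t τ) = g (t τ) ^ 2 := by
  have hquot := (hf.hasDerivAt.comp τ ht.hasDerivAt).div (hg.hasDerivAt.comp τ ht.hasDerivAt) hg0
  have hid : HasDerivAt (fun σ => f (t σ) / g (t σ)) 1 τ :=
    (hasDerivAt_id τ).congr_of_eventuallyEq hratio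
  have h := hquot.unique hid
  simp only [Function.comp_apply] at h
  simp only [wronskian]
  field_simp at h
  linear_combination h

theorem deriv_sub_eq_of_eventuallyEq_mul_pow {t v f g w : ℂ → ℂ} {τ a b : ℂ} (k : ℕ)
    (ht : HasDerivAt t (v τ) τ) (hv : HasDerivAt v (2 * a * v τ + b * v τ ^ 2) τ)
    (hf : HasDerivAt f (g (t τ) - k * b * f (t τ)) (t τ))
    (hw : w =ᶠ[𝓝 τ] fun σ => f (t σ) * v σ ^ k) :
    deriv w τ - 2 * k * a * w τ = g (t τ) * v τ ^ (k + 1) := by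
  rw [(((hf.comp τ ht).mul (hv.pow k)).congr_of_eventuallyEq hw).deriv, hw.eq_of_nhds]
  cases k with
  | zero => simp
  | succ n =>
    simp only [Nat.add_sub_cancel, Function.comp_apply, Pi.pow_apply]
    push_cast
    ring

structure SolutionRatioInverse (P Q F1 F2 t : ℂ → ℂ) (U Ω : Set ℂ) : Prop where
  isOpen_U : IsOpen U
  differentiableOn_F1 : DifferentiableOn ℂ F1 U
  differentiableOn_deriv_F1 : DifferentiableOn ℂ (deriv F1) U
  differentiableOn_F2 : DifferentiableOn ℂ F2 U
  differentiableOn_deriv_F2 : DifferentiableOn ℂ (deriv F2) U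
  F2_ne_zero : ∀ s ∈ U, F2 s ≠ 0
  ode_F1 : ∀ s ∈ U, deriv (deriv F1) s + P s * deriv F1 s + Q s * F1 s = 0
  ode_F2 : ∀ s ∈ U, deriv (deriv F2) s + P s * deriv F2 s + Q s * F2 s = 0
  isOpen_Ω : IsOpen Ω
  differentiableOn_t : DifferentiableOn ℂ t Ω
  mapsTo : ∀ τ ∈ Ω, t τ ∈ U
  ratio_eq : ∀ τ ∈ Ω, F1 (t τ) / F2 (t τ) = τ

namespace SolutionRatioInverse

variable {P Q F1 F2 t : ℂ → ℂ} {U Ω : Set ℂ} {τ : ℂ}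

theorem differentiableAt (H : SolutionRatioInverse P Q F1 F2 t U Ω) {f : ℂ → ℂ}
    (hf : DifferentiableOn ℂ f U) (hτ : τ ∈ Ω) : DifferentiableAt ℂ f (t τ) :=
  hf.differentiableAt (H.isOpen_U.mem_nhds (H.mapsTo τ hτ))

theorem hasDerivAt_t (H : SolutionRatioInverse P Q F1 F2 t U Ω) (hτ : τ ∈ Ω) :
    HasDerivAt t (deriv t τ) τ :=
  (H.differentiableOn_t.differentiableAt (H.isOpen_Ω.mem_nhds hτ)).hasDerivAt

theorem deriv_mul_wronskian (H : SolutionRatioInverse P Q F1 F2 t U Ω) (hτ : τ ∈ Ω) :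
    deriv t τ * wronskian F2 F1 (t τ) = F2 (t τ) ^ 2 :=
  deriv_mul_wronskian_eq_sq_of_ratio (H.differentiableAt H.differentiableOn_F1 hτ)
    (H.differentiableAt H.differentiableOn_F2 hτ) (H.F2_ne_zero _ (H.mapsTo τ hτ))
    (H.hasDerivAt_t hτ).differentiableAt (eventually_of_mem (H.isOpen_Ω.mem_nhds hτ) H.ratio_eq)

theorem wronskian_ne_zero (H : SolutionRatioInverse P Q F1 F2 t U Ω) (hτ : τ ∈ Ω) :
    wronskian F2 F1 (t τ) ≠ 0 :=
  right_ne_zero_of_mul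
    ((H.deriv_mul_wronskian hτ).symm ▸ pow_ne_zero 2 (H.F2_ne_zero _ (H.mapsTo τ hτ)))

theorem hasDerivAt_deriv (H : SolutionRatioInverse P Q F1 F2 t U Ω) (hτ : τ ∈ Ω) :
    HasDerivAt (deriv t) ((2 * logDeriv F2 (t τ) + P (t τ)) * deriv t τ ^ 2) τ := by
  have hderiv : ∀ σ ∈ Ω, deriv t σ = F2 (t σ) ^ 2 / wronskian F2 F1 (t σ) := fun σ hσ =>
    eq_div_of_mul_eq (H.wronskian_ne_zero hσ) (H.deriv_mul_wronskian hσ)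
  have hs := H.mapsTo τ hτ
  have hv := (hasDerivAt_sq_div_wronskian (H.differentiableAt H.differentiableOn_F1 hτ)
    (H.differentiableAt H.differentiableOn_deriv_F1 hτ)
    (H.differentiableAt H.differentiableOn_F2 hτ)
    (H.differentiableAt H.differentiableOn_deriv_F2 hτ) (H.F2_ne_zero _ hs)
    (H.wronskian_ne_zero hτ) (H.ode_F1 _ hs) (H.ode_F2 _ hs)).comp τ (H.hasDerivAt_t hτ)
  rw [← hderiv τ hτ, mul_assoc, ← sq] at hv
  exact hv.congr_of_eventuallyEq (eventually_of_mem (H.isOpen_Ω.mem_nhds hτ) hderiv)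

theorem logDeriv_comp (H : SolutionRatioInverse P Q F1 F2 t U Ω) (hτ : τ ∈ Ω) :
    logDeriv (F2 ∘ t) τ = logDeriv F2 (t τ) * deriv t τ :=
  _root_.logDeriv_comp (H.differentiableAt H.differentiableOn_F2 hτ)
    (H.hasDerivAt_t hτ).differentiableAt

theorem deriv_sub_eq_of_eqOn (H : SolutionRatioInverse P Q F1 F2 t U Ω) (k : ℕ) {w f g : ℂ → ℂ}
    (hw : ∀ σ ∈ Ω, w σ = f (t σ) * deriv t σ ^ k)
    (hf : ∀ s ∈ U, HasDerivAt f (g s - k * P s * f s) s) (hτ : τ ∈ Ω) :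
    deriv w τ - 2 * k * logDeriv (F2 ∘ t) τ * w τ = g (t τ) * deriv t τ ^ (k + 1) := by
  refine deriv_sub_eq_of_eventuallyEq_mul_pow k (H.hasDerivAt_t hτ) ?_ (hf _ (H.mapsTo τ hτ))
    (eventually_of_mem (H.isOpen_Ω.mem_nhds hτ) hw)
  refine (H.hasDerivAt_deriv hτ).congr_deriv ?_
  rw [H.logDeriv_comp hτ]
  ring

theorem deriv_logDeriv_sub_sq (H : SolutionRatioInverse P Q F1 F2 t U Ω) (hτ : τ ∈ Ω) :
    deriv (logDeriv (F2 ∘ t)) τ - logDeriv (F2 ∘ t) τ ^ 2 = -Q (t τ) * deriv t τ ^ 2 := by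
  have h := H.deriv_sub_eq_of_eqOn 1 (g := fun s => -Q s - logDeriv F2 s ^ 2)
    (fun σ hσ => (H.logDeriv_comp hσ).trans (by rw [pow_one]))
    (fun s hs => (hasDerivAt_logDeriv_of_ode (H.differentiableOn_F2.differentiableAt
      (H.isOpen_U.mem_nhds hs)) (H.differentiableOn_deriv_F2.differentiableAt
      (H.isOpen_U.mem_nhds hs)) (H.F2_ne_zero s hs) (H.ode_F2 s hs)).congr_deriv (by ring)) hτ
  linear_combination h + (logDeriv (F2 ∘ t) τ + logDeriv F2 (t τ) * deriv t τ) * H.logDeriv_comp hτ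

end SolutionRatioInverse

def hypergeomP (α β ts s : ℂ) : ℂ := (α + β) / s + (1 - α) / (s - ts)

-- `u_{2k} = chazyWeight{2k} (t) * t'^k`, where `chazyWeight4 = -Q` and each next weight is
-- `f' + k P f` of the previous one.
def chazyWeight4 (α β γ ts s : ℂ) : ℂ :=
  -((γ ^ 2 - (1 - α - β) ^ 2) * ts) / (4 * s ^ 2 * (s - ts))

def chazyWeight6 (α β γ ts s : ℂ) : ℂ :=
  (γ ^ 2 - (1 - α - β) ^ 2) * ts * ((1 - 2 * β) * s + 2 * (α + β - 1) * ts) /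
    (4 * s ^ 3 * (s - ts) ^ 2)

def chazyWeight8 (α β γ ts s : ℂ) : ℂ :=
  (γ ^ 2 - (1 - α - β) ^ 2) * ts * ((1 - 2 * β) * (3 * β - 1) * s ^ 2 +
      ((α + β - 1) * (12 * β - 7) + 2 * β - 1) * s * ts - 6 * (α + β - 1) ^ 2 * ts ^ 2) /
    (4 * s ^ 4 * (s - ts) ^ 3)

def chazyPoly (α β γ x4 x6 x8 : ℂ) : ℂ :=
  C88 α β γ * x4 ^ 2 * x8 ^ 2 + C86 α β γ * x4 * x6 ^ 2 * x8 + C84 α β γ * x4 ^ 4 * x8 +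
    C66 α β γ * x6 ^ 4 + C64 α β γ * x4 ^ 3 * x6 ^ 2 + C44coef α β * x4 ^ 6

section ChazyWeights

variable {α β γ ts s : ℂ}

theorem hasDerivAt_chazyWeight4 (hs : s ≠ 0) (hst : s ≠ ts) :
    HasDerivAt (chazyWeight4 α β γ ts)
      (chazyWeight6 α β γ ts s - 2 * hypergeomP α β ts s * chazyWeight4 α β γ ts s) s := by
  have hst' := sub_ne_zero.2 hst
  have hden : HasDerivAt (fun x : ℂ => 4 * x ^ 2 * (x - ts))
      (4 * (↑2 * s ^ 1) * (s - ts) + 4 * s ^ 2 * 1) s :=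
    ((hasDerivAt_pow 2 s).const_mul 4).mul ((hasDerivAt_id s).sub_const ts)
  refine ((hasDerivAt_const s _).div hden (by simp [hs, hst'])).congr_deriv ?_
  simp only [chazyWeight6, hypergeomP, chazyWeight4]
  field_simp
  ring

theorem hasDerivAt_chazyWeight6 (hs : s ≠ 0) (hst : s ≠ ts) :
    HasDerivAt (chazyWeight6 α β γ ts)
      (chazyWeight8 α β γ ts s - 3 * hypergeomP α β ts s * chazyWeight6 α β γ ts s) s := by
  have hst' := sub_ne_zero.2 hst
  have hnum : HasDerivAt (fun x : ℂ => (γ ^ 2 - (1 - α - β) ^ 2) * ts *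
      ((1 - 2 * β) * x + 2 * (α + β - 1) * ts))
      ((γ ^ 2 - (1 - α - β) ^ 2) * ts * ((1 - 2 * β) * 1)) s :=
    (((hasDerivAt_id s).const_mul (1 - 2 * β)).add_const _).const_mul _
  have hden : HasDerivAt (fun x : ℂ => 4 * x ^ 3 * (x - ts) ^ 2)
      (4 * (↑3 * s ^ 2) * (s - ts) ^ 2 + 4 * s ^ 3 * (↑2 * (s - ts) ^ 1 * 1)) s :=
    ((hasDerivAt_pow 3 s).const_mul 4).mul (((hasDerivAt_id s).sub_const ts).pow 2)
  refine (hnum.div hden (by simp [hs, hst'])).congr_deriv ?_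
  simp only [chazyWeight8, hypergeomP, chazyWeight6]
  field_simp
  ring

theorem chazyPoly_chazyWeight (hs : s ≠ 0) (hst : s ≠ ts) :
    chazyPoly α β γ (chazyWeight4 α β γ ts s) (chazyWeight6 α β γ ts s)
      (chazyWeight8 α β γ ts s) = 0 := by
  have hst' := sub_ne_zero.2 hst
  simp only [chazyPoly, chazyWeight4, chazyWeight6, chazyWeight8, C88, C86, C84, C66, C64, C44coef]
  field_simp
  ring

end ChazyWeights

theorem chazyPoly_mul_pow (α β γ x4 x6 x8 v : ℂ) :
    chazyPoly α β γ (x4 * v ^ 2) (x6 * v ^ 3) (x8 * v ^ 4) = v ^ 12 * chazyPoly α β γ x4 x6 x8 := by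
  simp only [chazyPoly]
  ring

theorem generalized_chazy_from_hypergeometric_general
    (α β γ tstar : ℂ)
    (P Q : ℂ → ℂ)
    (hP : ∀ t : ℂ, t ≠ 0 → t ≠ tstar →
      P t = (α + β) / t + (1 - α) / (t - tstar))
    (hQ : ∀ t : ℂ, t ≠ 0 → t ≠ tstar →
      Q t = (γ ^ 2 - (1 - α - β) ^ 2) * tstar / (4 * t ^ 2 * (t - tstar)))
    (U : Set ℂ) (hUopen : IsOpen U) (hUsub : ∀ s ∈ U, s ≠ 0 ∧ s ≠ tstar)
    (F1 F2 : ℂ → ℂ)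
    (hF1 : DifferentiableOn ℂ F1 U) (hF1' : DifferentiableOn ℂ (deriv F1) U)
    (hF2 : DifferentiableOn ℂ F2 U) (hF2' : DifferentiableOn ℂ (deriv F2) U)
    (hF2ne : ∀ s ∈ U, F2 s ≠ 0)
    (hode1 : ∀ s ∈ U, deriv (deriv F1) s + P s * deriv F1 s + Q s * F1 s = 0)
    (hode2 : ∀ s ∈ U, deriv (deriv F2) s + P s * deriv F2 s + Q s * F2 s = 0)
    (Ω : Set ℂ) (hΩ : IsOpen Ω)
    (t : ℂ → ℂ) (ht : DifferentiableOn ℂ t Ω) (htU : ∀ τ ∈ Ω, t τ ∈ U)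
    (hratio : ∀ τ ∈ Ω, F1 (t τ) / F2 (t τ) = τ)
    (u u4 u6 u8 : ℂ → ℂ)
    (hu : u = fun τ => deriv (fun σ => F2 (t σ)) τ / F2 (t τ))
    (hu4 : u4 = fun τ => deriv u τ - u τ ^ 2)
    (hu6 : u6 = fun τ => deriv u4 τ - 4 * u τ * u4 τ)
    (hu8 : u8 = fun τ => deriv u6 τ - 6 * u τ * u6 τ) :
    ∀ τ ∈ Ω,
      C88 α β γ * u4 τ ^ 2 * u8 τ ^ 2 + C86 α β γ * u4 τ * u6 τ ^ 2 * u8 τ +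
        C84 α β γ * u4 τ ^ 4 * u8 τ + C66 α β γ * u6 τ ^ 4 +
        C64 α β γ * u4 τ ^ 3 * u6 τ ^ 2 + C44coef α β * u4 τ ^ 6 = 0 := by
  have H : SolutionRatioInverse P Q F1 F2 t U Ω :=
    ⟨hUopen, hF1, hF1', hF2, hF2', hF2ne, hode1, hode2, hΩ, ht, htU, hratio⟩
  have hlog : u = logDeriv (F2 ∘ t) := hu
  subst hlog
  have hP' : ∀ s ∈ U, P s = hypergeomP α β tstar s := fun s hs => hP s (hUsub s hs).1 (hUsub s hs).2
  have hQ' : ∀ s ∈ U, Q s = -chazyWeight4 α β γ tstar s := fun s hs => by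
    rw [hQ s (hUsub s hs).1 (hUsub s hs).2, chazyWeight4, neg_div, neg_neg]
  have hu4' : ∀ σ ∈ Ω, u4 σ = chazyWeight4 α β γ tstar (t σ) * deriv t σ ^ 2 := fun σ hσ => by
    simp only [hu4]
    rw [H.deriv_logDeriv_sub_sq hσ, hQ' _ (htU σ hσ), neg_neg]
  have hu6' : ∀ σ ∈ Ω, u6 σ = chazyWeight6 α β γ tstar (t σ) * deriv t σ ^ 3 := fun σ hσ => by
    simp only [hu6]
    linear_combination H.deriv_sub_eq_of_eqOn 2 hu4' (fun s hs => by
      rw [hP' s hs]; push_cast; exact hasDerivAt_chazyWeight4 (hUsub s hs).1 (hUsub s hs).2) hσ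
  have hu8' : ∀ σ ∈ Ω, u8 σ = chazyWeight8 α β γ tstar (t σ) * deriv t σ ^ 4 := fun σ hσ => by
    simp only [hu8]
    linear_combination H.deriv_sub_eq_of_eqOn 3 hu6' (fun s hs => by
      rw [hP' s hs]; push_cast; exact hasDerivAt_chazyWeight6 (hUsub s hs).1 (hUsub s hs).2) hσ
  intro τ hτ
  change chazyPoly α β γ (u4 τ) (u6 τ) (u8 τ) = 0
  rw [hu4' τ hτ, hu6' τ hτ, hu8' τ hτ, chazyPoly_mul_pow,
    chazyPoly_chazyWeight (hUsub _ (htU τ hτ)).1 (hUsub _ (htU τ hτ)).2, mul_zero]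

theorem generalized_chazy_from_hypergeometric
    (α β γ tstar : ℂ) (htstar : tstar ≠ 0)
    (P Q : ℂ → ℂ)
    (hP : ∀ t : ℂ, t ≠ 0 → t ≠ tstar →
      P t = (α + β) / t + (1 - α) / (t - tstar))
    (hQ : ∀ t : ℂ, t ≠ 0 → t ≠ tstar →
      Q t = (γ ^ 2 - (1 - α - β) ^ 2) * tstar / (4 * t ^ 2 * (t - tstar)))
    (U : Set ℂ) (hUopen : IsOpen U) (hUsub : ∀ s ∈ U, s ≠ 0 ∧ s ≠ tstar)
    (F1 F2 : ℂ → ℂ)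
    (hF1 : DifferentiableOn ℂ F1 U) (hF1' : DifferentiableOn ℂ (deriv F1) U)
    (hF2 : DifferentiableOn ℂ F2 U) (hF2' : DifferentiableOn ℂ (deriv F2) U)
    (hF2ne : ∀ s ∈ U, F2 s ≠ 0)
    (hode1 : ∀ s ∈ U, deriv (deriv F1) s + P s * deriv F1 s + Q s * F1 s = 0)
    (hode2 : ∀ s ∈ U, deriv (deriv F2) s + P s * deriv F2 s + Q s * F2 s = 0)
    (Ω : Set ℂ) (hΩ : IsOpen Ω)
    (t : ℂ → ℂ) (ht : DifferentiableOn ℂ t Ω) (htU : ∀ τ ∈ Ω, t τ ∈ U)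
    (hratio : ∀ τ ∈ Ω, F1 (t τ) / F2 (t τ) = τ)
    (u u4 u6 u8 : ℂ → ℂ)
    (hu : u = fun τ => deriv (fun σ => F2 (t σ)) τ / F2 (t τ))
    (hu4 : u4 = fun τ => deriv u τ - u τ ^ 2)
    (hu6 : u6 = fun τ => deriv u4 τ - 4 * u τ * u4 τ)
    (hu8 : u8 = fun τ => deriv u6 τ - 6 * u τ * u6 τ) :
    ∀ τ ∈ Ω,
      C88 α β γ * u4 τ ^ 2 * u8 τ ^ 2 + C86 α β γ * u4 τ * u6 τ ^ 2 * u8 τ +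
        C84 α β γ * u4 τ ^ 4 * u8 τ + C66 α β γ * u6 τ ^ 4 +
        C64 α β γ * u4 τ ^ 3 * u6 τ ^ 2 + C44coef α β * u4 τ ^ 6 = 0 :=
  generalized_chazy_from_hypergeometric_general α β γ tstar P Q hP hQ U hUopen hUsub F1 F2 hF1 hF1'
    hF2 hF2' hF2ne hode1 hode2 Ω hΩ t ht htU hratio u u4 u6 u8 hu hu4 hu6 hu8
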